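/- Monotonicity under local computation: if X ↔ Y ↔ Z is a Markov chain of finite random variables, then 𝕂(XY, Z) ⊇ 𝕂(Y, Z), where 𝕂(A,B) := { (x,y,z) ∈ ℝ≥0³ : ∃Q, (I(Q;B|A), I(Q;A|B), I(A;B|Q)) ≤ (x,y,z) }. -/
import Mathlib


open Finset

open Classical in
/-- Probability that random variable `X` (on finite weighted space `p`) equals `a`. -/
noncomputable def prob {Ω α : Type*} [Fintype Ω] (p : Ω → ℝ) (X : Ω → α) (a : α) : ℝ :=
  ∑ ω, if X ω = a then p ω else 0

/-- Shannon entropy of a random variable. -/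
noncomputable def ent {Ω α : Type*} [Fintype Ω] [Fintype α] (p : Ω → ℝ) (X : Ω → α) : ℝ :=
  ∑ a, Real.negMulLog (prob p X a)

/-- Conditional entropy H(X|Y). -/
noncomputable def condEnt {Ω α β : Type*} [Fintype Ω] [Fintype α] [Fintype β]
    (p : Ω → ℝ) (X : Ω → α) (Y : Ω → β) : ℝ :=
  ent p (fun ω => (X ω, Y ω)) - ent p Y

/-- Mutual information I(X;Y). -/
noncomputable def mi {Ω α β : Type*} [Fintype Ω] [Fintype α] [Fintype β]
    (p : Ω → ℝ) (X : Ω → α) (Y : Ω → β) : ℝ :=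
  ent p X + ent p Y - ent p (fun ω => (X ω, Y ω))

/-- Conditional mutual information I(X;Y|Z). -/
noncomputable def cmi {Ω α β γ : Type*} [Fintype Ω] [Fintype α] [Fintype β] [Fintype γ]
    (p : Ω → ℝ) (X : Ω → α) (Y : Ω → β) (Z : Ω → γ) : ℝ :=
  ent p (fun ω => (X ω, Z ω)) + ent p (fun ω => (Y ω, Z ω))
    - ent p (fun ω => ((X ω, Y ω), Z ω)) - ent p Z

/-- `p` is a probability mass function. -/
def IsPMF {Ω : Type*} [Fintype Ω] (p : Ω → ℝ) : Prop :=
  (∀ ω, 0 ≤ p ω) ∧ ∑ ω, p ω = 1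

/-- Bipartite graph on 𝒳 ⊔ 𝒴 with an edge between x and y iff the joint pmf μ(x,y) > 0. -/
def edge {α β : Type*} (μ : α × β → ℝ) : α ⊕ β → α ⊕ β → Prop
  | Sum.inl x, Sum.inr y => 0 < μ (x, y)
  | Sum.inr y, Sum.inl x => 0 < μ (x, y)
  | _, _ => False


/-- Assisted-common-information region 𝕂 of a joint pmf μ on α × β: upward closure of
the triples (I(Q;B|A), I(Q;A|B), I(A;B|Q)) over all auxiliary finite random variables Q,
realized on the canonical space α × β × Fin m with (A,B)-marginal μ. -/
noncomputable def KRegion {α β : Type*} [Fintype α] [Fintype β] (μ : α × β → ℝ) :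
    Set (ℝ × ℝ × ℝ) :=
  { v | ∃ (m : ℕ) (ν : α × β × Fin m → ℝ),
      IsPMF ν ∧
      (∀ ab, prob ν (fun ω => (ω.1, ω.2.1)) ab = μ ab) ∧
      cmi ν (fun ω => ω.2.2) (fun ω => ω.2.1) (fun ω => ω.1) ≤ v.1 ∧
      cmi ν (fun ω => ω.2.2) (fun ω => ω.1) (fun ω => ω.2.1) ≤ v.2.1 ∧
      cmi ν (fun ω => ω.1) (fun ω => ω.2.1) (fun ω => ω.2.2) ≤ v.2.2 ∧
      0 ≤ v.1 ∧ 0 ≤ v.2.1 ∧ 0 ≤ v.2.2 }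

section Basic
open Classical
variable {Ω γ δ : Type*} [Fintype Ω] (p : Ω → ℝ)

lemma prob_nonneg (h0 : ∀ ω, 0 ≤ p ω) (W : Ω → γ) (a : γ) : 0 ≤ prob p W a := by
  classical
  refine Finset.sum_nonneg fun ω _ => ?_
  split <;> simp [h0 ω]

lemma prob_relabel (W : Ω → γ) {g : γ → δ} (hg : Function.Injective g) (c : γ) :
    prob p (fun ω => g (W ω)) (g c) = prob p W c := by
  classical
  unfold prob
  refine Finset.sum_congr rfl fun ω _ => ?_
  simp [hg.eq_iff]

lemma prob_id (q : Ω → ℝ) (ω0 : Ω) : prob q (fun ω => ω) ω0 = q ω0 := by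
  classical
  unfold prob
  simp [Finset.sum_ite_eq', Finset.mem_univ]

lemma prob_comp [Fintype γ] (W : Ω → γ) (g : γ → δ) (d : δ) :
    prob p (fun ω => g (W ω)) d = ∑ c, if g c = d then prob p W c else 0 := by
  classical
  unfold prob
  have : ∀ ω : Ω, (if g (W ω) = d then p ω else 0)
      = ∑ c, if g c = d then (if W ω = c then p ω else 0) else 0 := by
    intro ω
    rw [Finset.sum_eq_single (W ω)]
    · simp
    · intro c _ hc; simp [Ne.symm hc]
    · simp
  rw [Finset.sum_congr rfl fun ω _ => this ω, Finset.sum_comm]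
  refine Finset.sum_congr rfl fun c _ => ?_
  split <;> simp

lemma sum_prob [Fintype γ] (W : Ω → γ) : ∑ a, prob p W a = ∑ ω, p ω := by
  classical
  unfold prob
  rw [Finset.sum_comm]
  refine Finset.sum_congr rfl fun ω _ => ?_
  simp [Finset.sum_ite_eq', Finset.mem_univ]

end Basic

section Ent
open Classical
variable {Ω γ δ : Type*} [Fintype Ω] (p : Ω → ℝ)

lemma prob_eq_zero_of_not_range [Fintype γ] (W : Ω → γ) (g : γ → δ) (d : δ)
    (hd : ∀ c, g c ≠ d) : prob p (fun ω => g (W ω)) d = 0 := by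
  classical
  unfold prob
  refine Finset.sum_eq_zero fun ω _ => ?_
  simp [hd (W ω)]

lemma ent_relabel [Fintype γ] [Fintype δ] (W : Ω → γ) {g : γ → δ}
    (hg : Function.Injective g) : ent p (fun ω => g (W ω)) = ent p W := by
  classical
  unfold ent
  have h1 : ∑ d : δ, Real.negMulLog (prob p (fun ω => g (W ω)) d)
      = ∑ d ∈ Finset.image g Finset.univ, Real.negMulLog (prob p (fun ω => g (W ω)) d) := by
    refine (Finset.sum_subset (Finset.subset_univ _) ?_).symm
    intro d _ hd
    have : ∀ c, g c ≠ d := by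
      intro c hc
      exact hd (Finset.mem_image.2 ⟨c, Finset.mem_univ c, hc⟩)
    rw [prob_eq_zero_of_not_range p W g d this, Real.negMulLog_zero]
  rw [h1, Finset.sum_image (by intro a _ b _ h; exact hg h)]
  exact Finset.sum_congr rfl fun c _ => by rw [prob_relabel p W hg]

end Ent

section Gibbs
open Real
variable {A B C : Type*} [Fintype A] [Fintype B] [Fintype C]

lemma sum3 (f : A × B × C → ℝ) : ∑ i, f i = ∑ a, ∑ b, ∑ c, f (a, b, c) := by
  rw [Fintype.sum_prod_type]
  exact Finset.sum_congr rfl fun a _ => Fintype.sum_prod_type _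

lemma markov_factorization (q : A × B × C → ℝ) (hq0 : ∀ i, 0 ≤ q i) (hq1 : ∑ i, q i = 1)
    (h : (∑ x : A × C, negMulLog (∑ b, q (x.1, b, x.2)))
       + (∑ x : B × C, negMulLog (∑ a, q (a, x.1, x.2)))
       - (∑ i, negMulLog (q i))
       - (∑ c, negMulLog (∑ a, ∑ b, q (a, b, c))) = 0) :
    ∀ a b c, q (a, b, c) * (∑ a', ∑ b', q (a', b', c))
      = (∑ b', q (a, b', c)) * (∑ a', q (a', b, c)) := by
  classical
  set qAC : A → C → ℝ := fun a c => ∑ b, q (a, b, c) with hqACdef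
  set qBC : B → C → ℝ := fun b c => ∑ a, q (a, b, c) with hqBCdef
  set qC : C → ℝ := fun c => ∑ a', ∑ b', q (a', b', c) with hqCdef
  have hqAC0 : ∀ a c, 0 ≤ qAC a c := fun a c => Finset.sum_nonneg fun b _ => hq0 _
  have hqBC0 : ∀ b c, 0 ≤ qBC b c := fun b c => Finset.sum_nonneg fun a _ => hq0 _
  have hqC0 : ∀ c, 0 ≤ qC c := fun c =>
    Finset.sum_nonneg fun a _ => Finset.sum_nonneg fun b _ => hq0 _
  have hle1 : ∀ a b c, q (a, b, c) ≤ qAC a c := fun a b c =>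
    Finset.single_le_sum (f := fun b => q (a, b, c)) (fun b _ => hq0 _) (Finset.mem_univ b)
  have hle2 : ∀ a b c, q (a, b, c) ≤ qBC b c := fun a b c =>
    Finset.single_le_sum (f := fun a => q (a, b, c)) (fun a _ => hq0 _) (Finset.mem_univ a)
  have hACle : ∀ a c, qAC a c ≤ qC c := fun a c =>
    Finset.single_le_sum (f := fun a => qAC a c) (fun a _ => hqAC0 _ _) (Finset.mem_univ a)
  have hACsum : ∀ c, ∑ a, qAC a c = qC c := fun _ => rfl
  have hBCC : ∀ c, ∑ b, qBC b c = qC c := fun c => Finset.sum_comm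
  have hBCle : ∀ b c, qBC b c ≤ qC c := fun b c => by
    rw [← hBCC c]
    exact Finset.single_le_sum (f := fun b => qBC b c) (fun b _ => hqBC0 _ _) (Finset.mem_univ b)
  have hsumqC : ∑ c, qC c = 1 := by
    rw [← hq1, sum3 q, Finset.sum_comm]
    exact Finset.sum_congr rfl fun a _ => Finset.sum_comm
  -- the weight function
  set w : A × B × C → ℝ := fun i =>
    if qC i.2.2 = 0 then 0 else qAC i.1 i.2.2 * qBC i.2.1 i.2.2 / qC i.2.2 with hwdef
  have hw0 : ∀ i, 0 ≤ w i := by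
    intro i
    simp only [hwdef]
    split
    · exact le_refl 0
    · exact div_nonneg (mul_nonneg (hqAC0 _ _) (hqBC0 _ _)) (hqC0 _)
  have hsumw : ∑ i, w i = 1 := by
    rw [sum3 w]
    have : ∀ a b c, w (a, b, c) = (if qC c = 0 then 0 else qAC a c * qBC b c / qC c) := by
      intro a b c; rfl
    calc ∑ a, ∑ b, ∑ c, w (a, b, c)
        = ∑ a, ∑ c, ∑ b, (if qC c = 0 then 0 else qAC a c * qBC b c / qC c) := by
          exact Finset.sum_congr rfl fun a _ => Finset.sum_comm
      _ = ∑ c, ∑ a, ∑ b, (if qC c = 0 then 0 else qAC a c * qBC b c / qC c) :=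
          Finset.sum_comm
      _ = ∑ c, qC c := by
          refine Finset.sum_congr rfl fun c _ => ?_
          by_cases hc : qC c = 0
          · simp [hc]
          · simp only [hc, if_false]
            have h1 : ∑ a, ∑ b, qAC a c * qBC b c / qC c
                = ((∑ a, qAC a c) * (∑ b, qBC b c)) / qC c := by
              rw [Finset.sum_mul_sum, Finset.sum_div]
              exact Finset.sum_congr rfl fun a _ => by rw [Finset.sum_div]
            rw [h1, hACsum c, hBCC c, mul_div_assoc]
            rw [div_self hc, mul_one]
      _ = 1 := hsumqC
  -- marginal expectation helpers
  have hA : ∀ L : A → C → ℝ, ∑ a, ∑ c, qAC a c * L a c = ∑ i, q i * L i.1 i.2.2 := by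
    intro L
    rw [sum3 (fun i => q i * L i.1 i.2.2)]
    refine Finset.sum_congr rfl fun a _ => ?_
    calc ∑ c, qAC a c * L a c = ∑ c, ∑ b, q (a, b, c) * L a c :=
          Finset.sum_congr rfl fun c _ => Finset.sum_mul _ _ _
      _ = ∑ b, ∑ c, q (a, b, c) * L a c := Finset.sum_comm
  have hB : ∀ L : B → C → ℝ, ∑ b, ∑ c, qBC b c * L b c = ∑ i, q i * L i.2.1 i.2.2 := by
    intro L
    rw [sum3 (fun i => q i * L i.2.1 i.2.2)]
    calc ∑ b, ∑ c, qBC b c * L b c = ∑ b, ∑ c, ∑ a, q (a, b, c) * L b c :=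
          Finset.sum_congr rfl fun b _ => Finset.sum_congr rfl fun c _ => Finset.sum_mul _ _ _
      _ = ∑ b, ∑ a, ∑ c, q (a, b, c) * L b c := Finset.sum_congr rfl fun b _ => Finset.sum_comm
      _ = ∑ a, ∑ b, ∑ c, q (a, b, c) * L b c := Finset.sum_comm
  have hCm : ∀ L : C → ℝ, ∑ c, qC c * L c = ∑ i, q i * L i.2.2 := by
    intro L
    rw [sum3 (fun i => q i * L i.2.2)]
    calc ∑ c, qC c * L c = ∑ c, ∑ a, ∑ b, q (a, b, c) * L c := by
          refine Finset.sum_congr rfl fun c _ => ?_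
          rw [Finset.sum_mul]
          exact Finset.sum_congr rfl fun a _ => Finset.sum_mul _ _ _
      _ = ∑ a, ∑ c, ∑ b, q (a, b, c) * L c := Finset.sum_comm
      _ = ∑ a, ∑ b, ∑ c, q (a, b, c) * L c := Finset.sum_congr rfl fun a _ => Finset.sum_comm
  -- convert h into ∑ T = 0
  set T : A × B × C → ℝ := fun i =>
    q i * (Real.log (qAC i.1 i.2.2) + Real.log (qBC i.2.1 i.2.2)
      - Real.log (q i) - Real.log (qC i.2.2)) with hTdef
  have hT : ∑ i, T i = 0 := by
    have E1 : ∑ x : A × C, negMulLog (qAC x.1 x.2) = -∑ i, q i * Real.log (qAC i.1 i.2.2) := by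
      rw [← hA (fun a c => Real.log (qAC a c)), Fintype.sum_prod_type, ← Finset.sum_neg_distrib]
      refine Finset.sum_congr rfl fun a _ => ?_
      rw [← Finset.sum_neg_distrib]
      exact Finset.sum_congr rfl fun c _ => by rw [negMulLog, neg_mul]
    have E2 : ∑ x : B × C, negMulLog (qBC x.1 x.2) = -∑ i, q i * Real.log (qBC i.2.1 i.2.2) := by
      rw [← hB (fun b c => Real.log (qBC b c)), Fintype.sum_prod_type, ← Finset.sum_neg_distrib]
      refine Finset.sum_congr rfl fun b _ => ?_
      rw [← Finset.sum_neg_distrib]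
      exact Finset.sum_congr rfl fun c _ => by rw [negMulLog, neg_mul]
    have E3 : ∑ i, negMulLog (q i) = -∑ i, q i * Real.log (q i) := by
      rw [← Finset.sum_neg_distrib]
      exact Finset.sum_congr rfl fun i _ => by rw [negMulLog, neg_mul]
    have E4 : ∑ c, negMulLog (qC c) = -∑ i, q i * Real.log (qC i.2.2) := by
      rw [← hCm (fun c => Real.log (qC c)), ← Finset.sum_neg_distrib]
      exact Finset.sum_congr rfl fun c _ => by rw [negMulLog, neg_mul]
    have hsplit : ∑ i, T i = (∑ i, q i * Real.log (qAC i.1 i.2.2))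
        + (∑ i, q i * Real.log (qBC i.2.1 i.2.2)) - (∑ i, q i * Real.log (q i))
        - (∑ i, q i * Real.log (qC i.2.2)) := by
      have e : ∀ i : A × B × C, T i = q i * Real.log (qAC i.1 i.2.2)
          + q i * Real.log (qBC i.2.1 i.2.2) - q i * Real.log (q i)
          - q i * Real.log (qC i.2.2) := fun i => by rw [hTdef]; ring
      rw [Finset.sum_congr rfl fun i _ => e i, Finset.sum_sub_distrib, Finset.sum_sub_distrib,
        Finset.sum_add_distrib]
    rw [hsplit]
    rw [E1, E2, E3, E4] at h
    linarith
  -- termwise bound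
  have hkey : ∀ i, T i ≤ w i - q i := by
    rintro ⟨a, b, c⟩
    rcases eq_or_lt_of_le (hq0 (a, b, c)) with hq | hq
    · have : T (a, b, c) = 0 := by rw [hTdef]; simp [← hq]
      rw [this, ← hq]
      simpa using hw0 (a, b, c)
    · have hAC : 0 < qAC a c := lt_of_lt_of_le hq (hle1 a b c)
      have hBC : 0 < qBC b c := lt_of_lt_of_le hq (hle2 a b c)
      have hCc : 0 < qC c := lt_of_lt_of_le hAC (hACle a c)
      have hwv : w (a, b, c) = qAC a c * qBC b c / qC c := by
        rw [hwdef]; simp [hCc.ne']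
      have hwpos : 0 < w (a, b, c) := by
        rw [hwv]; positivity
      have hTv : T (a, b, c) = q (a, b, c) * Real.log (w (a, b, c) / q (a, b, c)) := by
        simp only [hTdef, hwv]
        rw [Real.log_div (by positivity) hq.ne',
          Real.log_div (mul_ne_zero hAC.ne' hBC.ne') hCc.ne', Real.log_mul hAC.ne' hBC.ne']
        ring
      rw [hTv]
      have hlog := Real.log_le_sub_one_of_pos (div_pos hwpos hq)
      calc q (a, b, c) * Real.log (w (a, b, c) / q (a, b, c))
          ≤ q (a, b, c) * (w (a, b, c) / q (a, b, c) - 1) :=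
            mul_le_mul_of_nonneg_left hlog hq.le
        _ = w (a, b, c) - q (a, b, c) := by field_simp
  -- equality termwise
  have hzero : ∀ i ∈ Finset.univ, w i - q i - T i = 0 := by
    refine (Finset.sum_eq_zero_iff_of_nonneg fun i _ => by linarith [hkey i]).mp ?_
    rw [Finset.sum_sub_distrib, Finset.sum_sub_distrib, hsumw, hq1, hT]
    ring
  have heq : ∀ i, q i = w i := by
    rintro ⟨a, b, c⟩
    have h0 := hzero (a, b, c) (Finset.mem_univ _)
    rcases eq_or_lt_of_le (hq0 (a, b, c)) with hq | hq
    · have hT0 : T (a, b, c) = 0 := by rw [hTdef]; simp [← hq]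
      rw [hT0] at h0
      linarith
    · have hAC : 0 < qAC a c := lt_of_lt_of_le hq (hle1 a b c)
      have hBC : 0 < qBC b c := lt_of_lt_of_le hq (hle2 a b c)
      have hCc : 0 < qC c := lt_of_lt_of_le hAC (hACle a c)
      have hwv : w (a, b, c) = qAC a c * qBC b c / qC c := by
        rw [hwdef]; simp [hCc.ne']
      have hwpos : 0 < w (a, b, c) := by rw [hwv]; positivity
      have hTv : T (a, b, c) = q (a, b, c) * Real.log (w (a, b, c) / q (a, b, c)) := by
        simp only [hTdef, hwv]
        rw [Real.log_div (by positivity) hq.ne',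
          Real.log_div (mul_ne_zero hAC.ne' hBC.ne') hCc.ne', Real.log_mul hAC.ne' hBC.ne']
        ring
      by_contra hne
      have hu : w (a, b, c) / q (a, b, c) ≠ 1 := by
        intro h1
        exact hne ((div_eq_one_iff_eq hq.ne').mp h1).symm
      have hstrict := Real.log_lt_sub_one_of_pos (div_pos hwpos hq) hu
      have : T (a, b, c) < w (a, b, c) - q (a, b, c) := by
        rw [hTv]
        calc q (a, b, c) * Real.log (w (a, b, c) / q (a, b, c))
            < q (a, b, c) * (w (a, b, c) / q (a, b, c) - 1) :=
              (mul_lt_mul_iff_right₀ hq).mpr hstrict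
          _ = w (a, b, c) - q (a, b, c) := by field_simp
      linarith
  -- conclusion
  intro a b c
  show q (a, b, c) * qC c = qAC a c * qBC b c
  by_cases hc : qC c = 0
  · have h1 : q (a, b, c) = 0 := le_antisymm (by
      calc q (a, b, c) ≤ qAC a c := hle1 a b c
        _ ≤ qC c := hACle a c
        _ = 0 := hc) (hq0 _)
    have h2 : qAC a c = 0 := le_antisymm (hc ▸ hACle a c) (hqAC0 _ _)
    rw [h1, h2]
    ring
  · have := heq (a, b, c)
    rw [hwdef] at this
    simp only [hc, if_false] at this
    rw [this]
    field_simp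

end Gibbs

section Lift
open Real
variable {𝒳 𝒴 R : Type*} [Fintype 𝒳] [Fintype 𝒴] [Fintype R]

lemma prob_lift {γ : Type*} (ν : 𝒴 × R → ℝ) (r : 𝒳 → 𝒴 → ℝ)
    (hone : ∀ y, (∑ x, r x y) = 1 ∨ ∀ ρ : R, ν (y, ρ) = 0)
    (w : 𝒴 × R → γ) (c : γ) :
    prob (fun ω : (𝒳 × 𝒴) × R => ν (ω.1.2, ω.2) * r ω.1.1 ω.1.2)
      (fun ω => w (ω.1.2, ω.2)) c = prob ν w c := by
  classical
  unfold prob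
  calc ∑ ω' : (𝒳 × 𝒴) × R, (if w (ω'.1.2, ω'.2) = c then ν (ω'.1.2, ω'.2) * r ω'.1.1 ω'.1.2 else 0)
      = ∑ xy : 𝒳 × 𝒴, ∑ zq : R, (if w (xy.2, zq) = c then ν (xy.2, zq) * r xy.1 xy.2 else 0) :=
        Fintype.sum_prod_type _
    _ = ∑ x, ∑ y, ∑ zq : R, (if w (y, zq) = c then ν (y, zq) * r x y else 0) :=
        Fintype.sum_prod_type _
    _ = ∑ y, ∑ zq : R, ∑ x, (if w (y, zq) = c then ν (y, zq) * r x y else 0) := by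
        rw [Finset.sum_comm]
        exact Finset.sum_congr rfl fun y _ => Finset.sum_comm
    _ = ∑ y, ∑ zq : R, (if w (y, zq) = c then ν (y, zq) * ∑ x, r x y else 0) := by
        refine Finset.sum_congr rfl fun y _ => Finset.sum_congr rfl fun zq _ => ?_
        split
        · rw [Finset.mul_sum]
        · simp
    _ = ∑ y, ∑ zq : R, (if w (y, zq) = c then ν (y, zq) else 0) := by
        refine Finset.sum_congr rfl fun y _ => Finset.sum_congr rfl fun zq _ => ?_
        rcases hone y with h | h
        · rw [h, mul_one]
        · simp [h zq]
    _ = ∑ ω : 𝒴 × R, (if w ω = c then ν ω else 0) :=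
        (Fintype.sum_prod_type (fun ω : 𝒴 × R => if w ω = c then ν ω else 0)).symm

lemma prob_lift_x {γ : Type*} (ν : 𝒴 × R → ℝ) (r : 𝒳 → 𝒴 → ℝ)
    (w : 𝒴 × R → γ) (ψ : γ → 𝒴) (hψ : ∀ ω, ψ (w ω) = ω.1) (x : 𝒳) (c : γ) :
    prob (fun ω : (𝒳 × 𝒴) × R => ν (ω.1.2, ω.2) * r ω.1.1 ω.1.2)
      (fun ω => (ω.1.1, w (ω.1.2, ω.2))) (x, c) = r x (ψ c) * prob ν w c := by
  classical
  calc prob (fun ω : (𝒳 × 𝒴) × R => ν (ω.1.2, ω.2) * r ω.1.1 ω.1.2)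
        (fun ω => (ω.1.1, w (ω.1.2, ω.2))) (x, c)
      = ∑ x', ∑ y, ∑ zq : R,
          (if x' = x then (if w (y, zq) = c then ν (y, zq) * r x' y else 0) else 0) := by
        unfold prob
        rw [Fintype.sum_prod_type, Fintype.sum_prod_type]
        refine Finset.sum_congr rfl fun x' _ => Finset.sum_congr rfl fun y _ =>
          Finset.sum_congr rfl fun zq _ => ?_
        simp only [Prod.mk.injEq, ite_and]
    _ = ∑ y, ∑ x', ∑ zq : R,
          (if x' = x then (if w (y, zq) = c then ν (y, zq) * r x' y else 0) else 0) :=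
        Finset.sum_comm
    _ = ∑ y, ∑ zq : R, ∑ x',
          (if x' = x then (if w (y, zq) = c then ν (y, zq) * r x' y else 0) else 0) :=
        Finset.sum_congr rfl fun y _ => Finset.sum_comm
    _ = ∑ y, ∑ zq : R, (if w (y, zq) = c then ν (y, zq) * r x y else 0) := by
        refine Finset.sum_congr rfl fun y _ => Finset.sum_congr rfl fun zq _ => ?_
        rw [Finset.sum_ite_eq' Finset.univ x
          (fun x' => if w (y, zq) = c then ν (y, zq) * r x' y else 0)]
        simp
    _ = ∑ y, ∑ zq : R, (if w (y, zq) = c then ν (y, zq) * r x (ψ c) else 0) := by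
        refine Finset.sum_congr rfl fun y _ => Finset.sum_congr rfl fun zq _ => ?_
        by_cases h : w (y, zq) = c
        · have hy : ψ c = y := by rw [← h, hψ (y, zq)]
          rw [hy]
        · simp [h]
    _ = ∑ ω : 𝒴 × R, (if w ω = c then ν ω * r x (ψ c) else 0) :=
        (Fintype.sum_prod_type (fun ω : 𝒴 × R => if w ω = c then ν ω * r x (ψ c) else 0)).symm
    _ = r x (ψ c) * ∑ ω : 𝒴 × R, (if w ω = c then ν ω else 0) := by
        rw [Finset.mul_sum]
        refine Finset.sum_congr rfl fun ω _ => ?_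
        split <;> ring

lemma ent_lift {γ : Type*} [Fintype γ] (ν : 𝒴 × R → ℝ) (r : 𝒳 → 𝒴 → ℝ)
    (hone : ∀ y, (∑ x, r x y) = 1 ∨ ∀ ρ : R, ν (y, ρ) = 0)
    (w : 𝒴 × R → γ) :
    ent (fun ω : (𝒳 × 𝒴) × R => ν (ω.1.2, ω.2) * r ω.1.1 ω.1.2)
      (fun ω => w (ω.1.2, ω.2)) = ent ν w := by
  unfold ent
  exact Finset.sum_congr rfl fun c _ => by rw [prob_lift ν r hone w c]

lemma ent_lift_x {γ : Type*} [Fintype γ] (ν : 𝒴 × R → ℝ) (r : 𝒳 → 𝒴 → ℝ)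
    (hone : ∀ y, (∑ x, r x y) = 1 ∨ ∀ ρ : R, ν (y, ρ) = 0)
    (w : 𝒴 × R → γ) (ψ : γ → 𝒴) (hψ : ∀ ω, ψ (w ω) = ω.1) :
    ent (fun ω : (𝒳 × 𝒴) × R => ν (ω.1.2, ω.2) * r ω.1.1 ω.1.2)
      (fun ω => (ω.1.1, w (ω.1.2, ω.2)))
      = ent ν w + ∑ ω : 𝒴 × R, ν ω * (∑ x, negMulLog (r x ω.1)) := by
  classical
  set P : γ → ℝ := fun c => prob ν w c with hPdef
  have hP0 : ∀ c, (∀ ρ : R, ν (ψ c, ρ) = 0) → P c = 0 := by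
    intro c hc
    rw [hPdef]
    refine Finset.sum_eq_zero fun ω _ => ?_
    by_cases h : w ω = c
    · have hy : ω.1 = ψ c := by rw [← hψ ω, h]
      have : ν ω = 0 := by
        have : ν (ω.1, ω.2) = 0 := by rw [hy]; exact hc ω.2
        simpa using this
      simp [h, this]
    · simp [h]
  unfold ent
  calc ∑ pc : 𝒳 × γ, negMulLog (prob (fun ω : (𝒳 × 𝒴) × R => ν (ω.1.2, ω.2) * r ω.1.1 ω.1.2)
        (fun ω => (ω.1.1, w (ω.1.2, ω.2))) pc)
      = ∑ x, ∑ c, negMulLog (r x (ψ c) * P c) := by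
        rw [Fintype.sum_prod_type]
        exact Finset.sum_congr rfl fun x _ => Finset.sum_congr rfl fun c _ => by
          rw [prob_lift_x ν r w ψ hψ x c]
    _ = ∑ c, ∑ x, (P c * negMulLog (r x (ψ c)) + r x (ψ c) * negMulLog (P c)) := by
        rw [Finset.sum_comm]
        exact Finset.sum_congr rfl fun c _ => Finset.sum_congr rfl fun x _ =>
          negMulLog_mul _ _
    _ = ∑ c, (P c * (∑ x, negMulLog (r x (ψ c))) + (∑ x, r x (ψ c)) * negMulLog (P c)) := by
        refine Finset.sum_congr rfl fun c _ => ?_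
        rw [Finset.sum_add_distrib, ← Finset.mul_sum, ← Finset.sum_mul]
    _ = ∑ c, (P c * (∑ x, negMulLog (r x (ψ c))) + negMulLog (P c)) := by
        refine Finset.sum_congr rfl fun c _ => ?_
        rcases hone (ψ c) with h | h
        · rw [h, one_mul]
        · rw [hP0 c h]
          simp
    _ = (∑ c, negMulLog (P c)) + ∑ c, P c * (∑ x, negMulLog (r x (ψ c))) := by
        rw [← Finset.sum_add_distrib]
        exact Finset.sum_congr rfl fun c _ => by ring
    _ = (∑ c, negMulLog (P c)) + ∑ ω : 𝒴 × R, ν ω * (∑ x, negMulLog (r x ω.1)) := by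
        congr 1
        calc ∑ c, P c * (∑ x, negMulLog (r x (ψ c)))
            = ∑ c, ∑ ω : 𝒴 × R, (if w ω = c then ν ω * (∑ x, negMulLog (r x (ψ c))) else 0) := by
              refine Finset.sum_congr rfl fun c _ => ?_
              rw [hPdef]
              show (∑ ω : 𝒴 × R, if w ω = c then ν ω else 0) * _ = _
              rw [Finset.sum_mul]
              exact Finset.sum_congr rfl fun ω _ => by split <;> ring
          _ = ∑ ω : 𝒴 × R, ∑ c, (if w ω = c then ν ω * (∑ x, negMulLog (r x (ψ c))) else 0) :=
              Finset.sum_comm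
          _ = ∑ ω : 𝒴 × R, ν ω * (∑ x, negMulLog (r x ω.1)) := by
              refine Finset.sum_congr rfl fun ω _ => ?_
              rw [Finset.sum_ite_eq]
              simp [hψ ω]

end Lift

section Fiber
variable {A B C : Type*} [Fintype A] [Fintype B] [Fintype C]

lemma sum_fiber_fst (f : A × B → ℝ) (a : A) :
    (∑ c : A × B, @ite ℝ (c.1 = a) (Classical.propDecidable _) (f c) 0) = ∑ b, f (a, b) := by
  classical
  rw [Fintype.sum_prod_type]
  rw [Finset.sum_eq_single a]
  · simp
  · intro a' _ ha'; simp [ha']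
  · simp

lemma sum_fiber_snd (f : A × B → ℝ) (b : B) :
    (∑ c : A × B, @ite ℝ (c.2 = b) (Classical.propDecidable _) (f c) 0) = ∑ a, f (a, b) := by
  classical
  rw [Fintype.sum_prod_type]
  refine Finset.sum_congr rfl fun a _ => ?_
  simp

lemma sum_fiber_13 (f : A × B × C → ℝ) (a : A) (c : C) :
    (∑ i : A × B × C, @ite ℝ ((i.1, i.2.2) = (a, c)) (Classical.propDecidable _) (f i) 0)
      = ∑ b, f (a, b, c) := by
  classical
  rw [sum3 (fun i : A × B × C =>
    @ite ℝ ((i.1, i.2.2) = (a, c)) (Classical.propDecidable _) (f i) 0)]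
  rw [Finset.sum_eq_single a]
  · refine Finset.sum_congr rfl fun b _ => ?_
    simp
  · intro a' _ ha'; simp [ha']
  · simp

lemma sum_fiber_3 (f : A × B × C → ℝ) (c : C) :
    (∑ i : A × B × C, @ite ℝ (i.2.2 = c) (Classical.propDecidable _) (f i) 0)
      = ∑ a, ∑ b, f (a, b, c) := by
  classical
  rw [sum3 (fun i : A × B × C => @ite ℝ (i.2.2 = c) (Classical.propDecidable _) (f i) 0)]
  refine Finset.sum_congr rfl fun a _ => Finset.sum_congr rfl fun b _ => ?_
  simp

lemma sum_fiber_12 (f : A × B × C → ℝ) (a : A) (b : B) :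
    (∑ i : A × B × C, @ite ℝ ((i.1, i.2.1) = (a, b)) (Classical.propDecidable _) (f i) 0)
      = ∑ c, f (a, b, c) := by
  classical
  rw [sum3 (fun i : A × B × C =>
    @ite ℝ ((i.1, i.2.1) = (a, b)) (Classical.propDecidable _) (f i) 0)]
  rw [Finset.sum_eq_single a]
  · rw [Finset.sum_eq_single b]
    · refine Finset.sum_congr rfl fun c _ => ?_
      simp
    · intro b' _ hb'; simp [hb']
    · simp
  · intro a' _ ha'; simp [ha']
  · simp

end Fiber

theorem stmt12 {Ω 𝒳 𝒴 𝒵 : Type*} [Fintype Ω] [Fintype 𝒳] [Fintype 𝒴] [Fintype 𝒵]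
    (p : Ω → ℝ) (hp : IsPMF p) (X : Ω → 𝒳) (Y : Ω → 𝒴) (Z : Ω → 𝒵)
    (hMarkov : cmi p X Z Y = 0) :
    KRegion (fun ab => prob p (fun ω => (Y ω, Z ω)) ab)
      ⊆ KRegion (fun ab => prob p (fun ω => ((X ω, Y ω), Z ω)) ab) := by
  classical
  intro v hv
  obtain ⟨m, ν, hν, hmarg, h1, h2, h3, hv1, hv2, hv3⟩ := hv
  -- the joint distribution of (X, Z, Y)
  set T : Ω → 𝒳 × 𝒵 × 𝒴 := fun ω => (X ω, Z ω, Y ω) with hTdef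
  set q : 𝒳 × 𝒵 × 𝒴 → ℝ := fun i => prob p T i with hqdef
  have hq0 : ∀ i, 0 ≤ q i := fun i => prob_nonneg p hp.1 T i
  have hq1 : ∑ i, q i = 1 := by
    simp only [hqdef]
    rw [sum_prob p T, hp.2]
  have hqAC : ∀ xy : 𝒳 × 𝒴, prob p (fun ω => (X ω, Y ω)) xy = ∑ z, q (xy.1, z, xy.2) := by
    rintro ⟨x, y⟩
    exact (prob_comp p T (fun i => (i.1, i.2.2)) (x, y)).trans
      (sum_fiber_13 (fun i => prob p T i) x y)
  have hqBC : ∀ zy : 𝒵 × 𝒴, prob p (fun ω => (Z ω, Y ω)) zy = ∑ x, q (x, zy.1, zy.2) := by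
    rintro ⟨z, y⟩
    exact (prob_comp p T Prod.snd (z, y)).trans
      (sum_fiber_snd (fun i : 𝒳 × (𝒵 × 𝒴) => prob p T i) (z, y))
  have hqC : ∀ y, prob p Y y = ∑ x, ∑ z, q (x, z, y) := by
    intro y
    exact (prob_comp p T (fun i => i.2.2) y).trans
      (sum_fiber_3 (fun i => prob p T i) y)
  have hentXZY : ent p (fun ω => ((X ω, Z ω), Y ω)) = ∑ i, Real.negMulLog (q i) := by
    have h : ent p (fun ω => ((X ω, Z ω), Y ω)) = ent p T :=
      ent_relabel p T (g := fun i : 𝒳 × 𝒵 × 𝒴 => ((i.1, i.2.1), i.2.2))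
        (by intro i j h; simp only [Prod.ext_iff] at h ⊢; tauto)
    rw [h]
    rfl
  have hMarkov' : (∑ x : 𝒳 × 𝒴, Real.negMulLog (∑ z, q (x.1, z, x.2)))
      + (∑ x : 𝒵 × 𝒴, Real.negMulLog (∑ a, q (a, x.1, x.2)))
      - (∑ i, Real.negMulLog (q i))
      - (∑ y, Real.negMulLog (∑ a, ∑ b, q (a, b, y))) = 0 := by
    have e1 : ∑ x : 𝒳 × 𝒴, Real.negMulLog (∑ z, q (x.1, z, x.2))
        = ent p (fun ω => (X ω, Y ω)) := by
      unfold ent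
      exact (Finset.sum_congr rfl fun xy _ => by rw [hqAC xy]).symm
    have e2 : ∑ x : 𝒵 × 𝒴, Real.negMulLog (∑ a, q (a, x.1, x.2))
        = ent p (fun ω => (Z ω, Y ω)) := by
      unfold ent
      exact (Finset.sum_congr rfl fun zy _ => by rw [hqBC zy]).symm
    have e4 : ∑ y, Real.negMulLog (∑ a, ∑ b, q (a, b, y)) = ent p Y := by
      unfold ent
      exact (Finset.sum_congr rfl fun y _ => by rw [hqC y]).symm
    have hcmi : ent p (fun ω => (X ω, Y ω)) + ent p (fun ω => (Z ω, Y ω))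
        - ent p (fun ω => ((X ω, Z ω), Y ω)) - ent p Y = 0 := hMarkov
    rw [e1, e2, e4, ← hentXZY]
    exact hcmi
  have hfact := markov_factorization q hq0 hq1 hMarkov'
  -- the conditional distribution of X given Y
  set r : 𝒳 → 𝒴 → ℝ := fun x y =>
    if prob p Y y = 0 then 0 else prob p (fun ω => (X ω, Y ω)) (x, y) / prob p Y y with hrdef
  have hr0 : ∀ x y, 0 ≤ r x y := by
    intro x y
    simp only [hrdef]
    split
    · exact le_refl 0
    · exact div_nonneg (prob_nonneg p hp.1 _ _) (prob_nonneg p hp.1 _ _)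
  have hrsum : ∀ y, prob p Y y ≠ 0 → ∑ x, r x y = 1 := by
    intro y hy
    simp only [hrdef, hy, if_false]
    rw [← Finset.sum_div]
    have hsum : ∑ x, prob p (fun ω => (X ω, Y ω)) (x, y) = prob p Y y := by
      rw [hqC y]
      exact Finset.sum_congr rfl fun x _ => hqAC (x, y)
    rw [hsum, div_self hy]
  have hνY0 : ∀ ω : 𝒴 × 𝒵 × Fin m, prob p Y ω.1 = 0 → ν ω = 0 := by
    rintro ⟨y, z, qq⟩ hy
    have hproj : prob ν (fun ω => (ω.1, ω.2.1)) (y, z) = ∑ c, ν (y, z, c) := by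
      refine (prob_comp ν (fun ω => ω) (fun i => (i.1, i.2.1)) (y, z)).trans ?_
      refine Eq.trans ?_ (sum_fiber_12 ν y z)
      exact Finset.sum_congr rfl fun i _ => by rw [prob_id ν i]
    have hYZswap : ∀ y z, prob p (fun ω => (Y ω, Z ω)) (y, z)
        = prob p (fun ω => (Z ω, Y ω)) (z, y) := by
      intro y z
      exact prob_relabel p (fun ω => (Z ω, Y ω))
        (g := fun i : 𝒵 × 𝒴 => (i.2, i.1))
        (by intro i j h; simp only [Prod.ext_iff] at h ⊢; tauto) (z, y)
    have hle : ν (y, z, qq) ≤ prob p Y y := by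
      calc ν (y, z, qq) ≤ ∑ c, ν (y, z, c) :=
            Finset.single_le_sum (f := fun c => ν (y, z, c)) (fun c _ => hν.1 _)
              (Finset.mem_univ qq)
        _ = prob ν (fun ω => (ω.1, ω.2.1)) (y, z) := hproj.symm
        _ = prob p (fun ω => (Y ω, Z ω)) (y, z) := hmarg (y, z)
        _ = prob p (fun ω => (Z ω, Y ω)) (z, y) := hYZswap y z
        _ = ∑ x, q (x, z, y) := hqBC (z, y)
        _ ≤ ∑ x, ∑ z', q (x, z', y) := by
            refine Finset.sum_le_sum fun x _ => ?_
            exact Finset.single_le_sum (f := fun z' => q (x, z', y)) (fun z' _ => hq0 _)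
              (Finset.mem_univ z)
        _ = prob p Y y := (hqC y).symm
    exact le_antisymm (by rw [hy] at hle; exact hle) (hν.1 _)
  have hone : ∀ y, (∑ x, r x y) = 1 ∨ ∀ ρ : 𝒵 × Fin m, ν (y, ρ) = 0 := by
    intro y
    by_cases hy : prob p Y y = 0
    · exact Or.inr fun ρ => hνY0 (y, ρ) hy
    · exact Or.inl (hrsum y hy)
  -- the new joint distribution
  refine ⟨m, fun ω : (𝒳 × 𝒴) × 𝒵 × Fin m => ν (ω.1.2, ω.2) * r ω.1.1 ω.1.2,
    ⟨fun ω => mul_nonneg (hν.1 _) (hr0 _ _), ?_⟩, ?_, ?_, ?_, ?_, hv1, hv2, hv3⟩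
  · -- sums to 1
    calc ∑ ω' : (𝒳 × 𝒴) × 𝒵 × Fin m, ν (ω'.1.2, ω'.2) * r ω'.1.1 ω'.1.2
        = ∑ a : 𝒴 × 𝒵 × Fin m, prob (fun ω : (𝒳 × 𝒴) × 𝒵 × Fin m => ν (ω.1.2, ω.2) * r ω.1.1 ω.1.2)
            (fun ω => (ω.1.2, ω.2)) a := (sum_prob _ _).symm
      _ = ∑ a : 𝒴 × 𝒵 × Fin m, ν a := by
          refine Finset.sum_congr rfl fun a _ => ?_
          rw [prob_lift ν r hone (fun ω => ω) a, prob_id]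
      _ = 1 := hν.2
  · -- marginal
    rintro ⟨⟨x, y⟩, z⟩
    have e : prob (fun ω : (𝒳 × 𝒴) × 𝒵 × Fin m => ν (ω.1.2, ω.2) * r ω.1.1 ω.1.2)
        (fun ω => (ω.1, ω.2.1)) ((x, y), z)
        = prob (fun ω : (𝒳 × 𝒴) × 𝒵 × Fin m => ν (ω.1.2, ω.2) * r ω.1.1 ω.1.2)
          (fun ω => (ω.1.1, (ω.1.2, ω.2.1))) (x, (y, z)) :=
      prob_relabel _ (fun ω : (𝒳 × 𝒴) × 𝒵 × Fin m => (ω.1.1, (ω.1.2, ω.2.1)))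
        (g := fun i : 𝒳 × (𝒴 × 𝒵) => ((i.1, i.2.1), i.2.2))
        (by intro i j h; simp only [Prod.ext_iff] at h ⊢; tauto) (x, (y, z))
    have e2 : prob (fun ω : (𝒳 × 𝒴) × 𝒵 × Fin m => ν (ω.1.2, ω.2) * r ω.1.1 ω.1.2)
        (fun ω => (ω.1.1, (ω.1.2, ω.2.1))) (x, (y, z))
        = r x y * prob ν (fun ω0 => (ω0.1, ω0.2.1)) (y, z) :=
      prob_lift_x ν r (fun ω0 => (ω0.1, ω0.2.1)) Prod.fst (fun ω0 => rfl) x (y, z)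
    have hXYZ : prob p (fun ω => ((X ω, Y ω), Z ω)) ((x, y), z) = q (x, z, y) :=
      prob_relabel p T (g := fun i : 𝒳 × 𝒵 × 𝒴 => ((i.1, i.2.2), i.2.1))
        (by intro i j h; simp only [Prod.ext_iff] at h ⊢; tauto) (x, z, y)
    rw [e, e2, hmarg (y, z)]
    show r x y * prob p (fun ω => (Y ω, Z ω)) (y, z)
      = prob p (fun ω => ((X ω, Y ω), Z ω)) ((x, y), z)
    rw [hXYZ]
    by_cases hy : prob p Y y = 0
    · have hr : r x y = 0 := by simp [hrdef, hy]
      have hqz : q (x, z, y) = 0 := by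
        refine le_antisymm ?_ (hq0 _)
        calc q (x, z, y) ≤ ∑ z', q (x, z', y) :=
              Finset.single_le_sum (f := fun z' => q (x, z', y)) (fun z' _ => hq0 _)
                (Finset.mem_univ z)
          _ ≤ ∑ x', ∑ z', q (x', z', y) :=
              Finset.single_le_sum (f := fun x' => ∑ z', q (x', z', y))
                (fun x' _ => Finset.sum_nonneg fun z' _ => hq0 _) (Finset.mem_univ x)
          _ = prob p Y y := (hqC y).symm
          _ = 0 := hy
      rw [hr, hqz, zero_mul]
    · have hf := hfact x z y
      rw [← hqC y] at hf
      have hb : ∑ b', q (x, b', y) = prob p (fun ω => (X ω, Y ω)) (x, y) := (hqAC (x, y)).symm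
      have ha : ∑ a', q (a', z, y) = prob p (fun ω => (Y ω, Z ω)) (y, z) := by
        rw [← hqBC (z, y)]
        exact (prob_relabel p (fun ω => (Z ω, Y ω))
          (g := fun i : 𝒵 × 𝒴 => (i.2, i.1))
          (by intro i j h; simp only [Prod.ext_iff] at h ⊢; tauto) (z, y)).symm
      rw [hb, ha] at hf
      have hr : r x y = prob p (fun ω => (X ω, Y ω)) (x, y) / prob p Y y := by
        simp [hrdef, hy]
      rw [hr]
      field_simp
      linarith [hf]
  · -- first cmi : I(Q;Z|XY) = I(Q;Z|Y)
    refine le_trans (le_of_eq ?_) h1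
    set ν' : (𝒳 × 𝒴) × 𝒵 × Fin m → ℝ :=
      fun ω => ν (ω.1.2, ω.2) * r ω.1.1 ω.1.2 with hν'def
    set C : ℝ := ∑ ω : 𝒴 × 𝒵 × Fin m, ν ω * (∑ x, Real.negMulLog (r x ω.1)) with hCdef
    have EA1 : ent ν' (fun ω => (ω.2.2, ω.1)) = ent ν (fun ω => (ω.2.2, ω.1)) + C := by
      have ha : ent ν' (fun ω => (ω.2.2, ω.1)) = ent ν' (fun ω => (ω.1.1, (ω.2.2, ω.1.2))) :=
        ent_relabel ν' (fun ω => (ω.1.1, (ω.2.2, ω.1.2)))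
          (g := fun i : 𝒳 × Fin m × 𝒴 => (i.2.1, (i.1, i.2.2)))
          (by intro i j h; simp only [Prod.ext_iff] at h ⊢; tauto)
      rw [ha]
      exact ent_lift_x ν r hone (fun ω0 => (ω0.2.2, ω0.1)) Prod.snd (fun ω0 => rfl)
    have EA2 : ent ν' (fun ω => (ω.2.1, ω.1)) = ent ν (fun ω => (ω.2.1, ω.1)) + C := by
      have ha : ent ν' (fun ω => (ω.2.1, ω.1)) = ent ν' (fun ω => (ω.1.1, (ω.2.1, ω.1.2))) :=
        ent_relabel ν' (fun ω => (ω.1.1, (ω.2.1, ω.1.2)))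
          (g := fun i : 𝒳 × 𝒵 × 𝒴 => (i.2.1, (i.1, i.2.2)))
          (by intro i j h; simp only [Prod.ext_iff] at h ⊢; tauto)
      rw [ha]
      exact ent_lift_x ν r hone (fun ω0 => (ω0.2.1, ω0.1)) Prod.snd (fun ω0 => rfl)
    have EA3 : ent ν' (fun ω => ((ω.2.2, ω.2.1), ω.1))
        = ent ν (fun ω => ((ω.2.2, ω.2.1), ω.1)) + C := by
      have ha : ent ν' (fun ω => ((ω.2.2, ω.2.1), ω.1))
          = ent ν' (fun ω => (ω.1.1, ((ω.2.2, ω.2.1), ω.1.2))) :=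
        ent_relabel ν' (fun ω => (ω.1.1, ((ω.2.2, ω.2.1), ω.1.2)))
          (g := fun i : 𝒳 × (Fin m × 𝒵) × 𝒴 => (i.2.1, (i.1, i.2.2)))
          (by intro i j h; simp only [Prod.ext_iff] at h ⊢; tauto)
      rw [ha]
      exact ent_lift_x ν r hone (fun ω0 => ((ω0.2.2, ω0.2.1), ω0.1)) Prod.snd (fun ω0 => rfl)
    have EA4 : ent ν' (fun ω => ω.1) = ent ν (fun ω => ω.1) + C :=
      ent_lift_x ν r hone (fun ω0 => ω0.1) id (fun ω0 => rfl)
    calc cmi ν' (fun ω => ω.2.2) (fun ω => ω.2.1) (fun ω => ω.1)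
        = ent ν' (fun ω => (ω.2.2, ω.1)) + ent ν' (fun ω => (ω.2.1, ω.1))
          - ent ν' (fun ω => ((ω.2.2, ω.2.1), ω.1)) - ent ν' (fun ω => ω.1) := rfl
      _ = ent ν (fun ω => (ω.2.2, ω.1)) + C + (ent ν (fun ω => (ω.2.1, ω.1)) + C)
          - (ent ν (fun ω => ((ω.2.2, ω.2.1), ω.1)) + C) - (ent ν (fun ω => ω.1) + C) := by
          rw [EA1, EA2, EA3, EA4]
      _ = ent ν (fun ω => (ω.2.2, ω.1)) + ent ν (fun ω => (ω.2.1, ω.1))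
          - ent ν (fun ω => ((ω.2.2, ω.2.1), ω.1)) - ent ν (fun ω => ω.1) := by ring
      _ = cmi ν (fun ω => ω.2.2) (fun ω => ω.2.1) (fun ω => ω.1) := rfl
  · -- second cmi : I(Q;XY|Z) = I(Q;Y|Z)
    refine le_trans (le_of_eq ?_) h2
    set ν' : (𝒳 × 𝒴) × 𝒵 × Fin m → ℝ :=
      fun ω => ν (ω.1.2, ω.2) * r ω.1.1 ω.1.2 with hν'def
    set C : ℝ := ∑ ω : 𝒴 × 𝒵 × Fin m, ν ω * (∑ x, Real.negMulLog (r x ω.1)) with hCdef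
    have EB1 : ent ν' (fun ω => (ω.2.2, ω.2.1)) = ent ν (fun ω => (ω.2.2, ω.2.1)) :=
      ent_lift ν r hone (fun ω0 => (ω0.2.2, ω0.2.1))
    have EB2 : ent ν' (fun ω => (ω.1, ω.2.1)) = ent ν (fun ω => (ω.1, ω.2.1)) + C := by
      have ha : ent ν' (fun ω => (ω.1, ω.2.1)) = ent ν' (fun ω => (ω.1.1, (ω.1.2, ω.2.1))) :=
        ent_relabel ν' (fun ω => (ω.1.1, (ω.1.2, ω.2.1)))
          (g := fun i : 𝒳 × 𝒴 × 𝒵 => ((i.1, i.2.1), i.2.2))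
          (by intro i j h; simp only [Prod.ext_iff] at h ⊢; tauto)
      rw [ha]
      exact ent_lift_x ν r hone (fun ω0 => (ω0.1, ω0.2.1)) Prod.fst (fun ω0 => rfl)
    have EB3 : ent ν' (fun ω => ((ω.2.2, ω.1), ω.2.1))
        = ent ν (fun ω => ((ω.2.2, ω.1), ω.2.1)) + C := by
      have ha : ent ν' (fun ω => ((ω.2.2, ω.1), ω.2.1))
          = ent ν' (fun ω => (ω.1.1, ((ω.2.2, ω.1.2), ω.2.1))) :=
        ent_relabel ν' (fun ω => (ω.1.1, ((ω.2.2, ω.1.2), ω.2.1)))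
          (g := fun i : 𝒳 × (Fin m × 𝒴) × 𝒵 => ((i.2.1.1, (i.1, i.2.1.2)), i.2.2))
          (by intro i j h; simp only [Prod.ext_iff] at h ⊢; tauto)
      rw [ha]
      exact ent_lift_x ν r hone (fun ω0 => ((ω0.2.2, ω0.1), ω0.2.1))
        (fun i => i.1.2) (fun ω0 => rfl)
    have EB4 : ent ν' (fun ω => ω.2.1) = ent ν (fun ω => ω.2.1) :=
      ent_lift ν r hone (fun ω0 => ω0.2.1)
    calc cmi ν' (fun ω => ω.2.2) (fun ω => ω.1) (fun ω => ω.2.1)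
        = ent ν' (fun ω => (ω.2.2, ω.2.1)) + ent ν' (fun ω => (ω.1, ω.2.1))
          - ent ν' (fun ω => ((ω.2.2, ω.1), ω.2.1)) - ent ν' (fun ω => ω.2.1) := rfl
      _ = ent ν (fun ω => (ω.2.2, ω.2.1)) + (ent ν (fun ω => (ω.1, ω.2.1)) + C)
          - (ent ν (fun ω => ((ω.2.2, ω.1), ω.2.1)) + C) - ent ν (fun ω => ω.2.1) := by
          rw [EB1, EB2, EB3, EB4]
      _ = ent ν (fun ω => (ω.2.2, ω.2.1)) + ent ν (fun ω => (ω.1, ω.2.1))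
          - ent ν (fun ω => ((ω.2.2, ω.1), ω.2.1)) - ent ν (fun ω => ω.2.1) := by ring
      _ = cmi ν (fun ω => ω.2.2) (fun ω => ω.1) (fun ω => ω.2.1) := rfl
  · -- third cmi : I(XY;Z|Q) = I(Y;Z|Q)
    refine le_trans (le_of_eq ?_) h3
    set ν' : (𝒳 × 𝒴) × 𝒵 × Fin m → ℝ :=
      fun ω => ν (ω.1.2, ω.2) * r ω.1.1 ω.1.2 with hν'def
    set C : ℝ := ∑ ω : 𝒴 × 𝒵 × Fin m, ν ω * (∑ x, Real.negMulLog (r x ω.1)) with hCdef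
    have EC1 : ent ν' (fun ω => (ω.1, ω.2.2)) = ent ν (fun ω => (ω.1, ω.2.2)) + C := by
      have ha : ent ν' (fun ω => (ω.1, ω.2.2)) = ent ν' (fun ω => (ω.1.1, (ω.1.2, ω.2.2))) :=
        ent_relabel ν' (fun ω => (ω.1.1, (ω.1.2, ω.2.2)))
          (g := fun i : 𝒳 × 𝒴 × Fin m => ((i.1, i.2.1), i.2.2))
          (by intro i j h; simp only [Prod.ext_iff] at h ⊢; tauto)
      rw [ha]
      exact ent_lift_x ν r hone (fun ω0 => (ω0.1, ω0.2.2)) Prod.fst (fun ω0 => rfl)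
    have EC2 : ent ν' (fun ω => (ω.2.1, ω.2.2)) = ent ν (fun ω => (ω.2.1, ω.2.2)) :=
      ent_lift ν r hone (fun ω0 => (ω0.2.1, ω0.2.2))
    have EC3 : ent ν' (fun ω => ((ω.1, ω.2.1), ω.2.2))
        = ent ν (fun ω => ((ω.1, ω.2.1), ω.2.2)) + C := by
      have ha : ent ν' (fun ω => ((ω.1, ω.2.1), ω.2.2))
          = ent ν' (fun ω => (ω.1.1, ((ω.1.2, ω.2.1), ω.2.2))) :=
        ent_relabel ν' (fun ω => (ω.1.1, ((ω.1.2, ω.2.1), ω.2.2)))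
          (g := fun i : 𝒳 × (𝒴 × 𝒵) × Fin m => (((i.1, i.2.1.1), i.2.1.2), i.2.2))
          (by intro i j h; simp only [Prod.ext_iff] at h ⊢; tauto)
      rw [ha]
      exact ent_lift_x ν r hone (fun ω0 => ((ω0.1, ω0.2.1), ω0.2.2))
        (fun i => i.1.1) (fun ω0 => rfl)
    have EC4 : ent ν' (fun ω => ω.2.2) = ent ν (fun ω => ω.2.2) :=
      ent_lift ν r hone (fun ω0 => ω0.2.2)
    calc cmi ν' (fun ω => ω.1) (fun ω => ω.2.1) (fun ω => ω.2.2)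
        = ent ν' (fun ω => (ω.1, ω.2.2)) + ent ν' (fun ω => (ω.2.1, ω.2.2))
          - ent ν' (fun ω => ((ω.1, ω.2.1), ω.2.2)) - ent ν' (fun ω => ω.2.2) := rfl
      _ = ent ν (fun ω => (ω.1, ω.2.2)) + C + ent ν (fun ω => (ω.2.1, ω.2.2))
          - (ent ν (fun ω => ((ω.1, ω.2.1), ω.2.2)) + C) - ent ν (fun ω => ω.2.2) := by
          rw [EC1, EC2, EC3, EC4]
      _ = ent ν (fun ω => (ω.1, ω.2.2)) + ent ν (fun ω => (ω.2.1, ω.2.2))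
          - ent ν (fun ω => ((ω.1, ω.2.1), ω.2.2)) - ent ν (fun ω => ω.2.2) := by ring
      _ = cmi ν (fun ω => ω.1) (fun ω => ω.2.1) (fun ω => ω.2.2) := rfl
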